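/- arXiv:2504.13968 — 2 statements merged into one kernel-verified Lean document; each statement's English description precedes it below -/
import Mathlib

section
/- For complex s with Re(s) > 1, the Dirichlet series of d(n²) satisfies ∑_{n=1}^∞ d(n²)/n^s = ζ(s)³ / ζ(2s). -/
/-!
Dirichlet series turn Dirichlet convolution into multiplication, so it suffices to factor
`n ↦ d(n²)` as a convolution; identities between multiplicative functions are checked on prime
powers. Since `d(p^{2k}) = 2k + 1 = (k + 1) + k`, we get `d(n²) = d ⋆ μ²`. In turn
`μ² = 1 ⋆ g`, where `g(m²) = μ(m)` and `g` vanishes off the squares; the Dirichlet series of `g`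
at `s` is that of `μ` at `2s`, i.e. `1 / ζ(2s)`. With `d = 1 ⋆ 1` this gives `ζ(s)³ / ζ(2s)`.
-/

open ArithmeticFunction Finset
open scoped ArithmeticFunction.Moebius ArithmeticFunction.zeta ArithmeticFunction.sigma
  ArithmeticFunction.Omega LSeries.notation

theorem Nat.Coprime.isSquare_mul_iff {m n : ℕ} (h : m.Coprime n) :
    IsSquare (m * n) ↔ IsSquare m ∧ IsSquare n := by
  refine ⟨fun ⟨c, hc⟩ => ?_, fun ⟨hm, hn⟩ => hm.mul hn⟩
  have hc' : m * n = c ^ 2 := hc.trans (sq c).symm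
  obtain ⟨a, rfl⟩ := exists_eq_pow_of_mul_eq_pow (Nat.isUnit_iff.2 h) hc'
  obtain ⟨b, rfl⟩ :=
    exists_eq_pow_of_mul_eq_pow (Nat.isUnit_iff.2 h.symm) ((mul_comm _ _).trans hc')
  exact ⟨even_two.isSquare_pow a, even_two.isSquare_pow b⟩

theorem Nat.mul_self_injective : Function.Injective fun m : ℕ => m * m :=
  fun _ _ => Nat.mul_self_inj.1

theorem Nat.Prime.isSquare_pow_iff {p k : ℕ} (hp : p.Prime) : IsSquare (p ^ k) ↔ Even k := by
  refine ⟨fun ⟨a, ha⟩ => ?_, fun hk => hk.isSquare_pow p⟩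
  have ha0 : a ≠ 0 := by rintro rfl; simp [hp.ne_zero] at ha
  exact ⟨Ω a, by rw [← cardFactors_apply_prime_pow (k := k) hp, ha, cardFactors_mul ha0 ha0]⟩

namespace ArithmeticFunction

variable {R : Type*}

section Zero

variable [Zero R] (f : ArithmeticFunction R)

def compSq : ArithmeticFunction R :=
  ⟨fun n => f (n ^ 2), by simp⟩

theorem compSq_apply (n : ℕ) : f.compSq n = f (n ^ 2) := rfl

def onSquares : ArithmeticFunction R :=
  ⟨fun n => if IsSquare n then f n.sqrt else 0, by simp⟩

theorem onSquares_apply_mul_self (m : ℕ) : f.onSquares (m * m) = f m := by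
  simp [onSquares, Nat.sqrt_eq]

theorem onSquares_apply_of_not_isSquare {n : ℕ} (hn : ¬IsSquare n) : f.onSquares n = 0 := by
  simp [onSquares, hn]

end Zero

theorem IsMultiplicative.compSq [MonoidWithZero R] {f : ArithmeticFunction R}
    (hf : f.IsMultiplicative) : f.compSq.IsMultiplicative :=
  ⟨by simp [compSq_apply, hf.map_one], fun hmn => by
    simpa only [compSq_apply, mul_pow] using hf.map_mul_of_coprime (hmn.pow 2 2)⟩

theorem IsMultiplicative.onSquares [MonoidWithZero R] {f : ArithmeticFunction R}
    (hf : f.IsMultiplicative) : f.onSquares.IsMultiplicative := by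
  refine ⟨by simpa using f.onSquares_apply_mul_self 1 ▸ hf.map_one, fun {m n} hmn => ?_⟩
  by_cases h : IsSquare m ∧ IsSquare n
  · obtain ⟨⟨a, rfl⟩, ⟨b, rfl⟩⟩ := h
    have hab : a.Coprime b := by
      simpa [Nat.coprime_mul_iff_left, Nat.coprime_mul_iff_right] using hmn
    rw [mul_mul_mul_comm, onSquares_apply_mul_self, onSquares_apply_mul_self,
      onSquares_apply_mul_self, hf.map_mul_of_coprime hab]
  · rw [onSquares_apply_of_not_isSquare _ (hmn.isSquare_mul_iff.not.2 h)]
    rcases not_and_or.1 h with hm | hn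
    · rw [onSquares_apply_of_not_isSquare _ hm, zero_mul]
    · rw [onSquares_apply_of_not_isSquare _ hn, mul_zero]

theorem mul_apply_prime_pow [Semiring R] (f g : ArithmeticFunction R) {p : ℕ} (hp : p.Prime)
    (k : ℕ) : (f * g) (p ^ k) = ∑ i ∈ range (k + 1), f (p ^ i) * g (p ^ (k - i)) := by
  rw [mul_apply, Nat.sum_divisorsAntidiagonal (fun a b => f a * g b),
    Nat.sum_divisors_prime_pow hp]
  refine sum_congr rfl fun i hi => ?_
  rw [Nat.pow_div (Nat.lt_succ_iff.1 (mem_range.1 hi)) hp.pos]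

section Moebius

variable [CommRing R] {p : ℕ} (hp : p.Prime)
include hp

theorem pmul_moebius_apply_prime_pow (i : ℕ) :
    ((μ : ArithmeticFunction R).pmul μ) (p ^ i) = if i ≤ 1 then 1 else 0 := by
  rcases i with _ | _ | i <;> simp [moebius_apply_prime hp, moebius_apply_prime_pow hp]

theorem onSquares_moebius_apply_prime_pow (i : ℕ) :
    (μ : ArithmeticFunction R).onSquares (p ^ i) =
      (if i = 0 then 1 else 0) - (if i = 2 then 1 else 0) := by
  rcases Nat.even_or_odd i with ⟨j, rfl⟩ | hi
  · rw [pow_add, onSquares_apply_mul_self]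
    rcases j with _ | _ | j
    · simp
    · simp [moebius_apply_prime hp]
    · simp [moebius_apply_prime_pow hp, show j + 2 + (j + 2) ≠ 2 by omega]
  · rw [onSquares_apply_of_not_isSquare _
      (hp.isSquare_pow_iff.not.2 (Nat.not_even_iff_odd.2 hi))]
    have := Nat.odd_iff.1 hi
    simp [show i ≠ 0 by omega, show i ≠ 2 by omega]

omit hp

theorem coe_zeta_mul_onSquares_moebius :
    (ζ : ArithmeticFunction R) * (μ : ArithmeticFunction R).onSquares =
      (μ : ArithmeticFunction R).pmul μ := by
  refine (IsMultiplicative.eq_iff_eq_on_prime_powers _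
    (isMultiplicative_zeta.natCast.mul isMultiplicative_moebius.intCast.onSquares) _
    (isMultiplicative_moebius.intCast.pmul isMultiplicative_moebius.intCast)).2 fun p k hp => ?_
  rw [coe_zeta_mul_apply, Nat.sum_divisors_prime_pow hp, pmul_moebius_apply_prime_pow hp]
  simp only [onSquares_moebius_apply_prime_pow hp, sum_sub_distrib, sum_ite_eq', mem_range]
  split_ifs <;> first | omega | simp

theorem natCoe_sigma_zero_compSq :
    ((σ 0).compSq : ArithmeticFunction R) = σ 0 * (μ : ArithmeticFunction R).pmul μ := by
  refine (IsMultiplicative.eq_iff_eq_on_prime_powers _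
    isMultiplicative_sigma.compSq.natCast _
    (isMultiplicative_sigma.natCast.mul
      (isMultiplicative_moebius.intCast.pmul isMultiplicative_moebius.intCast))).2
    fun p k hp => ?_
  rw [mul_comm, mul_apply_prime_pow _ _ hp, natCoe_apply, compSq_apply, ← pow_mul,
    sigma_zero_apply_prime_pow hp]
  rcases k with _ | k
  · simp
  · rw [sum_range_succ', sum_range_succ', sum_eq_zero fun i _ => by
      rw [pmul_moebius_apply_prime_pow hp, if_neg (by omega), zero_mul]]
    simp only [pmul_moebius_apply_prime_pow hp]
    simp [sigma_zero_apply_prime_pow hp]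
    ring

end Moebius

section LSeries

variable (f : ArithmeticFunction ℂ)

theorem term_onSquares_mul_self (s : ℂ) (m : ℕ) :
    LSeries.term ↗f.onSquares s (m * m) = LSeries.term ↗f (2 * s) m := by
  rcases eq_or_ne m 0 with rfl | hm
  · simp
  · rw [LSeries.term_of_ne_zero (mul_ne_zero hm hm), LSeries.term_of_ne_zero hm,
      onSquares_apply_mul_self, Nat.cast_mul, Complex.natCast_mul_natCast_cpow,
      ← Complex.cpow_add _ _ (Nat.cast_ne_zero.2 hm), two_mul]

theorem term_onSquares_eq_zero (s : ℂ) (n : ℕ) (hn : n ∉ Set.range fun m => m * m) :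
    LSeries.term ↗f.onSquares s n = 0 := by
  rw [LSeries.term_def₀ (by simp), onSquares_apply_of_not_isSquare, zero_mul]
  rintro ⟨m, rfl⟩
  exact hn ⟨m, rfl⟩

theorem LSeries_onSquares (s : ℂ) : LSeries ↗f.onSquares s = LSeries ↗f (2 * s) := by
  rw [LSeries, LSeries, ← Nat.mul_self_injective.tsum_eq
    (Function.support_subset_iff'.2 (term_onSquares_eq_zero f s))]
  exact tsum_congr (term_onSquares_mul_self f s)

variable {f} in
theorem LSeriesSummable_onSquares_iff {s : ℂ} :
    LSeriesSummable ↗f.onSquares s ↔ LSeriesSummable ↗f (2 * s) := by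
  rw [LSeriesSummable, LSeriesSummable,
    ← Nat.mul_self_injective.summable_iff (term_onSquares_eq_zero f s)]
  exact summable_congr (term_onSquares_mul_self f s)

end LSeries

end ArithmeticFunction

theorem LSeries_eq_tsum_pnat (f : ℕ → ℂ) (s : ℂ) :
    LSeries f s = ∑' n : ℕ+, f n / (n : ℂ) ^ s := by
  rw [LSeries, ← PNat.coe_injective.tsum_eq]
  · exact tsum_congr fun n => LSeries.term_of_ne_zero n.ne_zero f s
  · intro n hn
    exact ⟨⟨n, Nat.pos_of_ne_zero fun h => hn (h ▸ LSeries.term_zero f s)⟩, rfl⟩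

theorem dirichlet_series_divisor_sq (s : ℂ) (hs : 1 < s.re) :
    ∑' n : ℕ+, ((Nat.divisors ((n : ℕ) ^ 2)).card : ℂ) / (n : ℂ) ^ s =
      riemannZeta s ^ 3 / riemannZeta (2 * s) := by
  have hs₂ : 1 < (2 * s).re := by simp; linarith
  have hζ : LSeriesSummable ↗(ζ : ArithmeticFunction ℂ) s := LSeriesSummable_zeta_iff.2 hs
  have hμ : LSeriesSummable ↗(μ : ArithmeticFunction ℂ).onSquares s :=
    LSeriesSummable_onSquares_iff.2 (LSeriesSummable_moebius_iff.2 hs₂)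
  have hdecomp : ((σ 0).compSq : ArithmeticFunction ℂ) =
      ζ * ζ * (ζ * (μ : ArithmeticFunction ℂ).onSquares) := by
    rw [natCoe_sigma_zero_compSq, coe_zeta_mul_onSquares_moebius, ← zeta_mul_pow_eq_sigma,
      pow_zero_eq_zeta, natCoe_mul]
  have hμ₂ : LSeries ↗μ (2 * s) = (riemannZeta (2 * s))⁻¹ :=
    eq_inv_of_mul_eq_one_right
      (LSeries_zeta_eq_riemannZeta hs₂ ▸ LSeries_zeta_mul_Lseries_moebius hs₂)
  calc _ = LSeries ↗((σ 0).compSq : ArithmeticFunction ℂ) s := by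
        simp [LSeries_eq_tsum_pnat, compSq_apply, sigma_zero_apply]
    _ = riemannZeta s ^ 3 * LSeries ↗μ (2 * s) := by
      rw [hdecomp, LSeries_mul' (LSeriesSummable_mul hζ hζ) (LSeriesSummable_mul hζ hμ),
        LSeries_mul' hζ hζ, LSeries_mul' hζ hμ, LSeries_onSquares]
      simp only [natCoe_apply, intCoe_apply, LSeries_zeta_eq_riemannZeta hs]
      ring
    _ = _ := by rw [hμ₂, div_eq_mul_inv]
end

section
/- For every nonnegative integer m, the limit γ_m = lim_{n→∞} ( ∑_{k=1}^n (log k)^m / k − (log n)^(m+1)/(m+1) ) exists (these are the Stieltjes constants). -/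
/-!
On `[e ^ m, ∞)` the function `f x = log x ^ m / x` is antitone and nonnegative, with primitive
`log x ^ (m + 1) / (m + 1)`. For an antitone `f` bounded below, `∑_{k ≤ n} f k - ∫^n f`
decreases in `n` (each step adds `f (n + 1) - ∫_n^{n+1} f ≤ 0`) and is bounded below (compare
with the left-endpoint sums, which dominate the integral), so it converges. The finitely many
terms with `k < e ^ m` only shift the limit.
-/

open Filter Topology Real Set

theorem AntitoneOn.exists_tendsto_sum_sub_integral {f : ℝ → ℝ} {a : ℝ}
    (hf : AntitoneOn f (Ici a)) (hbdd : BddBelow (f '' Ici a)) :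
    ∃ l, Tendsto
      (fun n : ℕ => ∑ i ∈ Finset.range n, f (a + (i + 1 : ℕ)) - ∫ x in a..a + n, f x)
      atTop (𝓝 l) := by
  set b := fun n : ℕ => ∑ i ∈ Finset.range n, f (a + (i + 1 : ℕ)) - ∫ x in a..a + n, f x
  have hf_int : ∀ x y, a ≤ x → a ≤ y → IntervalIntegrable f MeasureTheory.volume x y :=
    fun x y hx hy => (hf.mono fun z hz => (le_inf hx hy).trans hz.1).intervalIntegrable
  have hb_anti : Antitone b := by
    refine antitone_nat_of_succ_le fun n => ?_
    have hstep : f (a + (n + 1 : ℕ)) ≤ ∫ x in a + n..a + n + 1, f x := by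
      have hsub : Icc (a + n) (a + n + (1 : ℕ)) ⊆ Ici a :=
        (Icc_subset_Ici_iff (by simp)).2 (by simp)
      simpa [add_assoc] using (hf.mono hsub).sum_le_integral
    have hsplit := intervalIntegral.integral_add_adjacent_intervals
      (hf_int a (a + n) le_rfl (by simp))
      (hf_int (a + n) (a + n + 1) (by simp) (by simp [add_assoc]; positivity))
    simp only [b, Finset.sum_range_succ, Nat.cast_succ, ← add_assoc, ← hsplit] at hstep ⊢
    linarith
  obtain ⟨c, hc⟩ := hbdd
  have hb_bdd : BddBelow (Set.range b) := by
    refine ⟨c - f a, ?_⟩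
    rintro _ ⟨n, rfl⟩
    have hint : ∫ x in a..a + n, f x ≤ ∑ i ∈ Finset.range n, f (a + i) :=
      (hf.mono Icc_subset_Ici_self).integral_le_sum
    have htel :
        ∑ i ∈ Finset.range n, (f (a + (i + 1 : ℕ)) - f (a + i)) = f (a + n) - f a := by
      simpa using Finset.sum_range_sub (fun i : ℕ => f (a + i)) n
    have hfn : c ≤ f (a + n) := hc ⟨a + n, by simp, rfl⟩
    simp only [b, Finset.sum_sub_distrib] at htel ⊢
    linarith
  exact ⟨_, tendsto_atTop_ciInf hb_anti hb_bdd⟩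

theorem Finset.sum_Icc_add_eq_add_sum_range {M : Type*} [AddCommMonoid M] (f : ℕ → M)
    {a N : ℕ} (haN : a ≤ N + 1) (j : ℕ) :
    ∑ k ∈ Icc a (j + N), f k = ∑ k ∈ Icc a N, f k + ∑ i ∈ range j, f (N + (i + 1)) := by
  induction j with
  | zero => simp
  | succ j ih =>
    rw [Nat.add_right_comm, sum_Icc_succ_top (by omega), ih, sum_range_succ, add_assoc,
      Nat.add_comm j N, Nat.add_assoc]

theorem antitoneOn_log_pow_div_self (m : ℕ) :
    AntitoneOn (fun x => log x ^ m / x) (Ici (exp m)) := by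
  rcases Nat.eq_zero_or_pos m with rfl | hm
  · simp only [pow_zero, Nat.cast_zero, exp_zero, one_div]
    exact fun x hx y _ hxy => inv_anti₀ (zero_lt_one.trans_le hx) hxy
  have hpos : ∀ z ∈ Ici (exp m), 0 < z := fun z hz => (exp_pos _).trans_le hz
  have hpow : ∀ z ∈ Ici (exp m), log z ^ m / z = (log z / z ^ ((m : ℝ)⁻¹)) ^ m := by
    intro z hz
    rw [div_pow, ← rpow_natCast (z ^ _), ← rpow_mul (hpos z hz).le,
      inv_mul_cancel₀ (by positivity), rpow_one]
  have hanti := log_div_self_rpow_antitoneOn (a := (m : ℝ)⁻¹) (by positivity)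
  rw [inv_inv] at hanti
  intro x hx y hy hxy
  have hlog : 0 ≤ log y := (Nat.cast_nonneg m).trans ((le_log_iff_exp_le (hpos y hy)).2 hy)
  simp only [hpow x hx, hpow y hy]
  exact pow_le_pow_left₀ (div_nonneg hlog (rpow_nonneg (hpos y hy).le _)) (hanti hx hy hxy) m

theorem integral_log_pow_div_self (m : ℕ) {a b : ℝ} (ha : 0 < a) (hab : a ≤ b) :
    ∫ x in a..b, log x ^ m / x = log b ^ (m + 1) / (m + 1) - log a ^ (m + 1) / (m + 1) := by
  have hpos : ∀ x ∈ uIcc a b, 0 < x := fun x hx => ha.trans_le (uIcc_of_le hab ▸ hx).1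
  refine intervalIntegral.integral_eq_sub_of_hasDerivAt
    (f := fun x => log x ^ (m + 1) / (m + 1)) (fun x hx => ?_) ?_
  · refine (((hasDerivAt_log (hpos x hx).ne').fun_pow (m + 1)).div_const
      ((m : ℝ) + 1)).congr_deriv ?_
    rw [Nat.add_sub_cancel]
    push_cast
    field_simp
  · exact ContinuousOn.intervalIntegrable <| ((continuousOn_log.mono fun x hx =>
      (hpos x hx).ne').pow m).div continuousOn_id fun x hx => (hpos x hx).ne'

theorem stieltjes_constants_exist (m : ℕ) :
    ∃ γm : ℝ, Tendsto (fun n : ℕ =>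
        (∑ k ∈ Finset.Icc 1 n, (Real.log k) ^ m / k) -
          (Real.log n) ^ (m + 1) / (m + 1))
      atTop (𝓝 γm) := by
  set N := ⌈exp m⌉₊
  have hN : exp m ≤ N := Nat.le_ceil _
  have hN0 : (0 : ℝ) < N := (exp_pos _).trans_le hN
  have hbdd : BddBelow ((fun x => log x ^ m / x) '' Ici (N : ℝ)) := by
    refine ⟨0, ?_⟩
    rintro _ ⟨x, hx : (N : ℝ) ≤ x, rfl⟩
    have hlog : 0 ≤ log x := log_nonneg ((one_le_exp (Nat.cast_nonneg m)).trans (hN.trans hx))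
    exact div_nonneg (pow_nonneg hlog m) (hN0.le.trans hx)
  obtain ⟨γ, hγ⟩ := ((antitoneOn_log_pow_div_self m).mono (Ici_subset_Ici.2 hN)
    ).exists_tendsto_sum_sub_integral hbdd
  refine ⟨_, (tendsto_add_atTop_iff_nat N).1 ((hγ.const_add
    (∑ k ∈ Finset.Icc 1 N, log k ^ m / k - log N ^ (m + 1) / (m + 1))).congr fun j => ?_)⟩
  rw [Finset.sum_Icc_add_eq_add_sum_range _ (by omega), integral_log_pow_div_self m hN0 (by simp)]
  push_cast
  rw [add_comm (j : ℝ)]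
  ring
end
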